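/- arXiv:1301.2375 — 9 statements merged into one kernel-verified Lean document; each statement's English description precedes it below -/
import Mathlib

section
/- Let (α, ≤) be a tree order with a document order ⊑. If x and v are incomparable, y and v are incomparable, x ⊏ v and v ⊏ y, then x ⊓ y < v, i.e., the lowest common ancestor of x and y is a proper ancestor of v. (This is the key step showing that keyword nodes taken from the preceding area and the next-sibling area of an anchor v cannot produce a new distinct SLCA result.) -/
namespace XMLDiv

variable {α : Type*}

/-- Two nodes are incomparable under the ancestor order `≤`. -/
def Incomp [LE α] (x y : α) : Prop := ¬ x ≤ y ∧ ¬ y ≤ x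

/-- Strict version `⊏` of a document order `⊑` given by `dle`. -/
def Dlt (dle : α → α → Prop) (x y : α) : Prop := dle x y ∧ x ≠ y

/-- `dle` is a document order on the tree order `(α, ≤)`: a linear order
(total, antisymmetric, transitive) extending the ancestor order, in which
the descendant set of every node is an interval. -/
structure IsDocOrder [Preorder α] (dle : α → α → Prop) : Prop where
  total : ∀ a b : α, dle a b ∨ dle b a
  antisymm : ∀ a b : α, dle a b → dle b a → a = b
  trans : ∀ a b c : α, dle a b → dle b c → dle a c
  le_imp : ∀ a b : α, a ≤ b → dle a b
  interval : ∀ v a b c : α, v ≤ a → v ≤ b → dle a c → dle c b → v ≤ c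

/-- In a tree order with a document order, if `x` and `y` are both incomparable
with `v`, `x ⊏ v` and `v ⊏ y`, then the lowest common ancestor `x ⊓ y` is a
proper ancestor of `v`. -/
theorem meet_lt_anchor_of_pre_next [SemilatticeInf α]
    (hchain : ∀ a b c : α, a ≤ c → b ≤ c → a ≤ b ∨ b ≤ a)
    {dle : α → α → Prop} (hdoc : IsDocOrder dle)
    {v x y : α} (hxv : Incomp x v) (hyv : Incomp y v)
    (hxltv : Dlt dle x v) (hvlty : Dlt dle v y) :
    x ⊓ y < v := by
  have hmv : x ⊓ y ≤ v :=
    hdoc.interval (x ⊓ y) x y v inf_le_left inf_le_right hxltv.1 hvlty.1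
  refine lt_of_le_of_ne hmv (fun h => hxv.2 ?_)
  rw [← h]; exact inf_le_left

end XMLDiv
end

section
/- Let (α, ≤) be a tree order with a document order ⊑. If v and w are incomparable and v ⊏ w, then for every x with v ≤ x and every y with w ≤ y one has x ⊏ y; that is, the entire subtree of v precedes the entire subtree of w in document order (the subtrees of incomparable nodes occupy disjoint intervals of the document order). -/
namespace XMLDiv

variable {α : Type*}

/-- Subtrees of incomparable nodes occupy disjoint intervals of the document
order: if `v` and `w` are incomparable and `v ⊏ w`, then every descendant of
`v` precedes every descendant of `w` in document order. -/
theorem subtree_lt_subtree [SemilatticeInf α]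
    (hchain : ∀ a b c : α, a ≤ c → b ≤ c → a ≤ b ∨ b ≤ a)
    {dle : α → α → Prop} (hdoc : IsDocOrder dle)
    {v w : α} (hvw : Incomp v w) (hlt : Dlt dle v w) :
    ∀ x, v ≤ x → ∀ y, w ≤ y → Dlt dle x y := by
  intro x hvx y hwy
  have hvy : ¬ v ≤ y := by
    intro h
    rcases hchain v w y h hwy with h' | h'
    · exact hvw.1 h'
    · exact hvw.2 h'
  have hvdy : dle v y := hdoc.trans _ _ _ hlt.1 (hdoc.le_imp _ _ hwy)
  constructor
  · rcases hdoc.total x y with h | h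
    · exact h
    · exact absurd (hdoc.interval v v x y le_rfl hvx hvdy h) hvy
  · rintro rfl
    exact hvy hvx

end XMLDiv
end

section
/- (Single Anchor, independence part of Theorem 1.) Let (α, ≤) be a tree order with a document order ⊑, let v ∈ α be an anchor node, and let F be a finite nonempty set of nodes of α. If some element of F lies in Anc(v), or if there exist elements of F lying in two different areas among Pre(v), Des(v), Next(v), then the meet (lowest common ancestor) of all elements of F is a proper ancestor of v, i.e., inf F < v. Consequently such a choice of keyword nodes cannot yield a new distinct SLCA result with respect to the existing result v: the ancestor area generates no new result, and no new distinct SLCA result can be generated across the areas Pre(v), Des(v), Next(v). -/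
namespace XMLDiv

variable {α : Type*}

/-- The ancestor area of the anchor `v`: proper ancestors of `v`. -/
def Anc [Preorder α] (v : α) : Set α := {x | x < v}

/-- The descendant area of the anchor `v`: `v` and its descendants. -/
def Des [LE α] (v : α) : Set α := {x | v ≤ x}

/-- The preceding-sibling area of the anchor `v`: nodes incomparable with `v`
that precede `v` in document order. -/
def Pre [LE α] (dle : α → α → Prop) (v : α) : Set α :=
  {x | Incomp x v ∧ Dlt dle x v}

/-- The next-sibling area of the anchor `v`: nodes incomparable with `v`
that follow `v` in document order. -/
def Next [LE α] (dle : α → α → Prop) (v : α) : Set α :=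
  {x | Incomp x v ∧ Dlt dle v x}

/-- Single anchor, independence part: if a finite nonempty set `F` of keyword
nodes contains a node of the ancestor area `Anc(v)`, or contains nodes lying in
two different areas among `Pre(v)`, `Des(v)`, `Next(v)`, then the meet (lowest
common ancestor) of all elements of `F` is a proper ancestor of `v`; hence such
a choice of keyword nodes cannot yield a new distinct SLCA result w.r.t. `v`. -/
theorem single_anchor_independence [SemilatticeInf α]
    (hchain : ∀ a b c : α, a ≤ c → b ≤ c → a ≤ b ∨ b ≤ a)
    {dle : α → α → Prop} (hdoc : IsDocOrder dle) (v : α)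
    (F : Finset α) (hF : F.Nonempty)
    (h : (∃ a ∈ F, a ∈ Anc v) ∨
         (∃ a ∈ F, ∃ b ∈ F,
            (a ∈ Pre dle v ∧ b ∈ Des v) ∨
            (a ∈ Pre dle v ∧ b ∈ Next dle v) ∨
            (a ∈ Des v ∧ b ∈ Next dle v))) :
    F.inf' hF id < v := by
  rcases h with ⟨a, haF, ha⟩ | ⟨a, haF, b, hbF, hcase⟩
  · exact lt_of_le_of_lt (Finset.inf'_le id haF) ha
  · have hma : F.inf' hF id ≤ a ⊓ b :=
      le_inf (Finset.inf'_le id haF) (Finset.inf'_le id hbF)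
    have hmv : a ⊓ b < v := by
      rcases hcase with ⟨⟨hinc, _⟩, hb⟩ | ⟨⟨hinc, hda⟩, ⟨hincb, hdb⟩⟩ | ⟨hb, ⟨hincb, _⟩⟩
      · -- Pre & Des
        rcases hchain (a ⊓ b) v b inf_le_right hb with hle | hle
        · exact lt_of_le_of_ne hle (fun h => hinc.2 (h ▸ inf_le_left))
        · exact absurd (hle.trans inf_le_left) hinc.2
      · -- Pre & Next
        have hle : a ⊓ b ≤ v :=
          hdoc.interval (a ⊓ b) a b v inf_le_left inf_le_right hda.1 hdb.1
        exact lt_of_le_of_ne hle (fun h => hinc.2 (h ▸ inf_le_left))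
      · -- Des & Next
        rcases hchain (a ⊓ b) v a inf_le_left hb with hle | hle
        · exact lt_of_le_of_ne hle (fun h => hincb.2 (h ▸ inf_le_right))
        · exact absurd (hle.trans inf_le_right) hincb.2
    exact lt_of_le_of_lt hma hmv

end XMLDiv
end

section
/- (Multiple Anchors, partition part of Theorem 2.) Let (α, ≤) be a tree order with a document order ⊑ and let v_1 ⊏ v_2 ⊏ ... ⊏ v_m (m ≥ 1) be pairwise incomparable anchor nodes. Then the ancestor area A, the m descendant areas D_1, ..., D_m, and the m+1 gap areas P_0, P_1, ..., P_m are pairwise disjoint and their union is all of α. In particular, the node lists of any query are divided by the m anchors into the 2m+1 effective areas D_1, ..., D_m, P_0, ..., P_m together with the ancestor area A. -/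
namespace XMLDiv

variable {α : Type*}

/-- The ancestor area of a family `v` of anchors: nodes that are proper
ancestors of some anchor. -/
def AncArea [Preorder α] {m : ℕ} (v : Fin m → α) : Set α :=
  {x | ∃ k, x < v k}

/-- The `k`-th gap area (`0 ≤ k ≤ m`) of the anchors `v 0 ⊏ ⋯ ⊏ v (m-1)`
(here `v i` is the `(i+1)`-st anchor): nodes incomparable with every anchor,
following the `k`-th anchor (when `k ≥ 1`) and preceding the `(k+1)`-st anchor
(when `k < m`) in document order. -/
def GapArea [LE α] (dle : α → α → Prop) {m : ℕ} (v : Fin m → α)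
    (k : Fin (m + 1)) : Set α :=
  {x | (∀ j : Fin m, Incomp x (v j)) ∧
       (∀ h : 1 ≤ (k : ℕ), Dlt dle (v ⟨(k : ℕ) - 1, by have := k.isLt; omega⟩) x) ∧
       (∀ h : (k : ℕ) < m, Dlt dle x (v ⟨(k : ℕ), h⟩))}

/-- The `2m+1` effective areas of the anchors: the `m` descendant areas
`D_1, …, D_m` together with the `m+1` gap areas `P_0, …, P_m`. -/
def Eff [LE α] (dle : α → α → Prop) {m : ℕ} (v : Fin m → α) :
    Fin m ⊕ Fin (m + 1) → Set α
  | Sum.inl k => Des (v k)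
  | Sum.inr k => GapArea dle v k

/-- Multiple anchors, partition part: given pairwise incomparable anchors
`v 0 ⊏ ⋯ ⊏ v (m-1)` (`m ≥ 1`), the ancestor area, the `m` descendant areas and
the `m+1` gap areas are pairwise disjoint and their union is all of `α`. -/
theorem multi_anchor_partition [SemilatticeInf α]
    (hchain : ∀ a b c : α, a ≤ c → b ≤ c → a ≤ b ∨ b ≤ a)
    {dle : α → α → Prop} (hdoc : IsDocOrder dle)
    {m : ℕ} (hm : 1 ≤ m) (v : Fin m → α)
    (hord : ∀ i j : Fin m, i < j → Dlt dle (v i) (v j))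
    (hinc : ∀ i j : Fin m, i ≠ j → Incomp (v i) (v j)) :
    (∀ k, AncArea v ∩ Des (v k) = ∅) ∧
    (∀ k, AncArea v ∩ GapArea dle v k = ∅) ∧
    (∀ j k, j ≠ k → Des (v j) ∩ Des (v k) = ∅) ∧
    (∀ j k, Des (v j) ∩ GapArea dle v k = ∅) ∧
    (∀ j k, j ≠ k → GapArea dle v j ∩ GapArea dle v k = ∅) ∧
    (AncArea v ∪ (⋃ k, Des (v k)) ∪ (⋃ k, GapArea dle v k) = Set.univ) := by
  classical
  have hdle_refl : ∀ a : α, dle a a := fun a => hdoc.le_imp a a le_rfl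
  have hmono : ∀ i j : Fin m, i ≤ j → dle (v i) (v j) := by
    intro i j h
    rcases lt_or_eq_of_le h with h | h
    · exact (hord i j h).1
    · subst h; exact hdle_refl _
  -- dichotomy for x incomparable with v j
  have hdich : ∀ (x : α) (j : Fin m), Incomp x (v j) →
      Dlt dle (v j) x ∨ Dlt dle x (v j) := by
    intro x j h
    have hne : x ≠ v j := fun hx => h.1 (hx ▸ le_rfl)
    rcases hdoc.total (v j) x with ht | ht
    · exact Or.inl ⟨ht, fun hx => hne hx.symm⟩
    · exact Or.inr ⟨ht, hne⟩
  have gapgap : ∀ j k : Fin (m + 1), (j : ℕ) < (k : ℕ) →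
      GapArea dle v j ∩ GapArea dle v k = ∅ := by
    intro j k hjk
    ext x
    simp only [Set.mem_inter_iff, Set.mem_empty_iff_false, iff_false, not_and]
    rintro ⟨_, _, hj3⟩ ⟨_, hk2, _⟩
    have hjm : (j : ℕ) < m := by have := k.isLt; omega
    have h1 : Dlt dle x (v ⟨(j : ℕ), hjm⟩) := hj3 hjm
    have hk1 : 1 ≤ (k : ℕ) := by omega
    have h2 : Dlt dle (v ⟨(k : ℕ) - 1, by have := k.isLt; omega⟩) x := hk2 hk1
    have h3 : dle (v ⟨(j : ℕ), hjm⟩) (v ⟨(k : ℕ) - 1, by have := k.isLt; omega⟩) :=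
      hmono _ _ (by simp [Fin.le_def]; omega)
    exact h2.2 (hdoc.antisymm _ _ h2.1 (hdoc.trans _ _ _ h1.1 h3))
  refine ⟨?_, ?_, ?_, ?_, ?_, ?_⟩
  · intro k
    ext x
    simp only [Set.mem_inter_iff, Set.mem_empty_iff_false, iff_false, not_and]
    rintro ⟨j, hj⟩ hk
    by_cases hjk : j = k
    · subst hjk; exact absurd (lt_of_le_of_lt hk hj) (lt_irrefl _)
    · exact (hinc k j (Ne.symm hjk)).1 (le_of_lt (lt_of_le_of_lt hk hj))
  · intro k
    ext x
    simp only [Set.mem_inter_iff, Set.mem_empty_iff_false, iff_false, not_and]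
    rintro ⟨j, hj⟩ ⟨hinc', _, _⟩
    exact (hinc' j).1 (le_of_lt hj)
  · intro j k hjk
    ext x
    simp only [Set.mem_inter_iff, Set.mem_empty_iff_false, iff_false, not_and]
    intro hj hk
    rcases hchain (v j) (v k) x hj hk with h | h
    · exact (hinc j k hjk).1 h
    · exact (hinc j k hjk).2 h
  · intro j k
    ext x
    simp only [Set.mem_inter_iff, Set.mem_empty_iff_false, iff_false, not_and]
    rintro hj ⟨hinc', _, _⟩
    exact (hinc' j).2 hj
  · intro j k hjk
    rcases Nat.lt_or_ge (j : ℕ) (k : ℕ) with h | h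
    · exact gapgap j k h
    · have h' : (k : ℕ) < (j : ℕ) := by
        rcases Nat.lt_or_ge (k : ℕ) (j : ℕ) with h' | h'
        · exact h'
        · exact absurd (Fin.ext (by omega)) hjk
      rw [Set.inter_comm]; exact gapgap k j h'
  · ext x
    simp only [Set.mem_union, Set.mem_iUnion, Set.mem_univ, iff_true]
    by_cases h1 : ∃ j, v j ≤ x
    · exact Or.inl (Or.inr h1)
    by_cases h2 : ∃ j, x < v j
    · exact Or.inl (Or.inl h2)
    push_neg at h1 h2
    have hincx : ∀ j : Fin m, Incomp x (v j) := by
      intro j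
      refine ⟨fun hle => ?_, h1 j⟩
      rcases lt_or_eq_of_le hle with h | h
      · exact absurd h (h2 j)
      · exact h1 j (h ▸ le_rfl)
    right
    set S : Finset (Fin m) := Finset.univ.filter (fun j => Dlt dle (v j) x) with hS
    rcases S.eq_empty_or_nonempty with hSe | hSne
    · refine ⟨⟨0, by omega⟩, hincx, fun h => by simp at h, fun h => ?_⟩
      rcases hdich x ⟨0, h⟩ (hincx _) with hd | hd
      · have hmem : (⟨0, h⟩ : Fin m) ∈ S :=
          Finset.mem_filter.mpr ⟨Finset.mem_univ _, hd⟩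
        rw [hSe] at hmem
        exact absurd hmem (Finset.notMem_empty _)
      · exact hd
    · set j0 := S.max' hSne with hj0
      have hj0S : j0 ∈ S := S.max'_mem hSne
      have hj0max : ∀ j ∈ S, j ≤ j0 := fun j hj => S.le_max' j hj
      have hj0d : Dlt dle (v j0) x := (Finset.mem_filter.mp hj0S).2
      refine ⟨⟨(j0 : ℕ) + 1, by have := j0.isLt; omega⟩, hincx, fun h => ?_, fun h => ?_⟩
      · have : ((⟨(j0 : ℕ) + 1, by have := j0.isLt; omega⟩ : Fin (m + 1)) : ℕ) - 1
            = (j0 : ℕ) := rfl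
        simpa [Fin.eta] using hj0d
      · rcases hdich x ⟨(j0 : ℕ) + 1, h⟩ (hincx _) with hd | hd
        · have hmem : (⟨(j0 : ℕ) + 1, h⟩ : Fin m) ∈ S :=
            Finset.mem_filter.mpr ⟨Finset.mem_univ _, hd⟩
          have := hj0max _ hmem
          simp [Fin.le_def] at this
        · exact hd

end XMLDiv
end

section
/- (Multiple Anchors, independence part of Theorem 2.) Let (α, ≤) be a tree order with a document order ⊑, let v_1 ⊏ v_2 ⊏ ... ⊏ v_m (m ≥ 1) be pairwise incomparable anchor nodes, and let F be a finite nonempty set of nodes of α. If some element of F lies in the ancestor area A, or if there exist elements of F lying in two different areas among the 2m+1 effective areas D_1, ..., D_m, P_0, ..., P_m, then there is an index j such that the meet (lowest common ancestor) of all elements of F satisfies inf F < v_j, i.e., it is a proper ancestor of some anchor. Consequently the 2m+1 effective areas are independent for computing new distinct SLCA candidates: no new distinct SLCA result can be generated across areas. -/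
namespace XMLDiv

variable {α : Type*}

/-- If `u ≤ a` but `¬ u ≤ b`, then `a ⊓ b` is a proper ancestor of `u`. -/
private lemma inf_lt_of_des [SemilatticeInf α]
    (hchain : ∀ a b c : α, a ≤ c → b ≤ c → a ≤ b ∨ b ≤ a)
    {u a b : α} (ha : u ≤ a) (hb : ¬ u ≤ b) : a ⊓ b < u := by
  have h1 : a ⊓ b ≤ u ∨ u ≤ a ⊓ b := hchain _ _ a inf_le_left ha
  rcases h1 with h1 | h1
  · refine lt_of_le_of_ne h1 ?_
    rintro rfl
    exact hb inf_le_right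
  · exact absurd (h1.trans inf_le_right) hb

/-- Two nodes in distinct gap areas have their meet a proper ancestor of an anchor. -/
private lemma inf_lt_of_gaps [SemilatticeInf α]
    {dle : α → α → Prop} (hdoc : IsDocOrder dle)
    {m : ℕ} {v : Fin m → α}
    (hord : ∀ i j : Fin m, i < j → Dlt dle (v i) (v j))
    {k l : Fin (m + 1)} (hkl : (k : ℕ) < (l : ℕ))
    {a b : α} (ha : a ∈ GapArea dle v k) (hb : b ∈ GapArea dle v l) :
    ∃ j, a ⊓ b < v j := by
  have hl1 : 1 ≤ (l : ℕ) := by omega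
  have hlm : (l : ℕ) - 1 < m := by have := l.isLt; omega
  have hkm : (k : ℕ) < m := by have := l.isLt; omega
  set u : Fin m := ⟨(l : ℕ) - 1, hlm⟩ with hu
  refine ⟨u, ?_⟩
  have hub : dle (v u) b := (hb.2.1 hl1).1
  have hak : dle a (v ⟨(k : ℕ), hkm⟩) := (ha.2.2 hkm).1
  have hau : dle a (v u) := by
    rcases eq_or_lt_of_le (by omega : (k : ℕ) ≤ (l : ℕ) - 1) with heq | hlt
    · have : (⟨(k : ℕ), hkm⟩ : Fin m) = u := by exact Fin.ext heq
      rwa [this] at hak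
    · exact hdoc.trans _ _ _ hak (hord ⟨(k : ℕ), hkm⟩ u hlt).1
  have hle : a ⊓ b ≤ v u :=
    hdoc.interval (a ⊓ b) a b (v u) inf_le_left inf_le_right hau hub
  refine lt_of_le_of_ne hle ?_
  rintro heq
  exact (ha.1 u).2 (heq ▸ inf_le_left)

/-- Multiple anchors, independence part: if a finite nonempty set `F` of
keyword nodes contains a node of the ancestor area, or contains nodes lying in
two different areas among the `2m+1` effective areas, then the meet (lowest
common ancestor) of all elements of `F` is a proper ancestor of some anchor;
hence no new distinct SLCA result can be generated across areas. -/
theorem multi_anchor_independence [SemilatticeInf α]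
    (hchain : ∀ a b c : α, a ≤ c → b ≤ c → a ≤ b ∨ b ≤ a)
    {dle : α → α → Prop} (hdoc : IsDocOrder dle)
    {m : ℕ} (hm : 1 ≤ m) (v : Fin m → α)
    (hord : ∀ i j : Fin m, i < j → Dlt dle (v i) (v j))
    (hinc : ∀ i j : Fin m, i ≠ j → Incomp (v i) (v j))
    (F : Finset α) (hF : F.Nonempty)
    (h : (∃ a ∈ F, a ∈ AncArea v) ∨
         (∃ r s : Fin m ⊕ Fin (m + 1), r ≠ s ∧
            ∃ a ∈ F, a ∈ Eff dle v r ∧ ∃ b ∈ F, b ∈ Eff dle v s)) :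
    ∃ j, F.inf' hF id < v j := by

  -- reduce to finding two elements whose meet is a proper ancestor of an anchor
  have key : ∀ {a b : α}, a ∈ F → b ∈ F → ∀ j, a ⊓ b < v j →
      ∃ j, F.inf' hF id < v j := by
    intro a b haF hbF j hj
    refine ⟨j, lt_of_le_of_lt ?_ hj⟩
    exact le_inf (Finset.inf'_le id haF) (Finset.inf'_le id hbF)
  rcases h with ⟨a, haF, k, hak⟩ | ⟨r, s, hrs, a, haF, har, b, hbF, hbs⟩
  · exact ⟨k, lt_of_le_of_lt (Finset.inf'_le id haF) hak⟩
  · rcases r with k | k <;> rcases s with l | l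
    · -- D_k vs D_l
      have hkl : k ≠ l := by rintro rfl; exact hrs rfl
      have hka : v k ≤ a := har
      have hlb : v l ≤ b := hbs
      have hnb : ¬ v k ≤ b := by
        intro h'
        rcases hchain (v k) (v l) b h' hlb with h'' | h''
        · exact (hinc k l hkl).1 h''
        · exact (hinc k l hkl).2 h''
      exact key haF hbF k (inf_lt_of_des hchain hka hnb)
    · -- D_k vs P_l
      have hka : v k ≤ a := har
      have hnb : ¬ v k ≤ b := (hbs.1 k).2
      exact key haF hbF k (inf_lt_of_des hchain hka hnb)
    · -- P_k vs D_l
      have hlb : v l ≤ b := hbs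
      have hna : ¬ v l ≤ a := (har.1 l).2
      have : b ⊓ a < v l := inf_lt_of_des hchain hlb hna
      exact key haF hbF l (by rwa [inf_comm])
    · -- P_k vs P_l
      have hkl : (k : ℕ) ≠ (l : ℕ) := by
        intro h'; exact hrs (by rw [Fin.ext h'])
      rcases lt_or_gt_of_ne hkl with h' | h'
      · obtain ⟨j, hj⟩ := inf_lt_of_gaps hdoc hord h' har hbs
        exact key haF hbF j hj
      · obtain ⟨j, hj⟩ := inf_lt_of_gaps hdoc hord h' hbs har
        exact key haF hbF j (by rwa [inf_comm])


end XMLDiv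
end

section
/- Let (α, ≤) be a tree order with a document order ⊑ and let v_1 ⊏ v_2 ⊏ ... ⊏ v_m (m ≥ 1) be pairwise incomparable anchor nodes. Then each effective area is upward closed under the descendant relation: for every region R among D_1, ..., D_m, P_0, ..., P_m, if w ∈ R and w ≤ x, then x ∈ R. In other words, the whole subtree of any node lying in an effective area is contained in that area. -/
namespace XMLDiv

variable {α : Type*}

/-- Each effective area is upward closed under the descendant relation: the
whole subtree of any node lying in an effective area is contained in that
area. -/
theorem eff_upward_closed [SemilatticeInf α]
    (hchain : ∀ a b c : α, a ≤ c → b ≤ c → a ≤ b ∨ b ≤ a)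
    {dle : α → α → Prop} (hdoc : IsDocOrder dle)
    {m : ℕ} (hm : 1 ≤ m) (v : Fin m → α)
    (hord : ∀ i j : Fin m, i < j → Dlt dle (v i) (v j))
    (hinc : ∀ i j : Fin m, i ≠ j → Incomp (v i) (v j)) :
    ∀ r : Fin m ⊕ Fin (m + 1), ∀ w x : α,
      w ∈ Eff dle v r → w ≤ x → x ∈ Eff dle v r := by
  rintro (k | k) w x hw hwx
  · exact le_trans hw hwx
  · obtain ⟨hinc', hlo, hhi⟩ := hw
    have hxinc : ∀ j : Fin m, Incomp x (v j) := by
      intro j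
      constructor
      · intro hxv
        exact (hinc' j).1 (le_trans hwx hxv)
      · intro hvx
        rcases hchain w (v j) x hwx hvx with h | h
        · exact (hinc' j).1 h
        · exact (hinc' j).2 h
    have hxne : ∀ j : Fin m, x ≠ v j := by
      intro j he
      exact (hxinc j).2 (he ▸ le_refl x)
    refine ⟨hxinc, ?_, ?_⟩
    · intro h
      have := hlo h
      exact ⟨hdoc.trans _ _ _ this.1 (hdoc.le_imp _ _ hwx), fun he => hxne _ he.symm⟩
    · intro h
      have hwv := hhi h
      refine ⟨?_, hxne _⟩
      by_contra hnx
      rcases hdoc.total x (v ⟨(k : ℕ), h⟩) with h' | h'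
      · exact hnx h'
      · exact (hinc' _).1 (hdoc.interval w w x _ le_rfl hwx hwv.1 h')

end XMLDiv
end

section
/- (Pruning Property.) Let (α, ≤) be a tree order with a document order ⊑, let v_1 ⊏ v_2 ⊏ ... ⊏ v_m (m ≥ 1) be pairwise incomparable anchor nodes, let L : ι → Set α be a family of keyword node lists, and let R be one of the effective areas D_1, ..., D_m, P_0, ..., P_m. If there is an index i such that L i ∩ R = ∅ (some query keyword has no instance in the area R), then no node of R covers the family L; in particular R contains no SLCA of L, so the area R can be pruned without any computation. -/
namespace XMLDiv

variable {α : Type*}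

/-- `v` covers the family `S` of keyword node lists: for every index `i`
there is a keyword node `x ∈ S i` of which `v` is an ancestor-or-self. -/
def Covers [LE α] {ι : Type*} (S : ι → Set α) (v : α) : Prop :=
  ∀ i, ∃ x ∈ S i, v ≤ x

/-- `v` is a smallest lowest common ancestor (SLCA) of the family `S`:
`v` covers `S` and no proper descendant `w` of `v` covers `S`. -/
def IsSLCA [Preorder α] {ι : Type*} (S : ι → Set α) (v : α) : Prop :=
  Covers S v ∧ ∀ w, v < w → ¬ Covers S w

/-- Pruning property: if some keyword node list `L i` has no instance in an
effective area `R`, then no node of `R` covers the family `L`; in particular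
`R` contains no SLCA of `L`, so the area `R` can be pruned without any
computation. -/
theorem pruning_property [SemilatticeInf α]
    (hchain : ∀ a b c : α, a ≤ c → b ≤ c → a ≤ b ∨ b ≤ a)
    {dle : α → α → Prop} (hdoc : IsDocOrder dle)
    {m : ℕ} (hm : 1 ≤ m) (v : Fin m → α)
    (hord : ∀ i j : Fin m, i < j → Dlt dle (v i) (v j))
    (hinc : ∀ i j : Fin m, i ≠ j → Incomp (v i) (v j))
    {ι : Type*} (L : ι → Set α) (r : Fin m ⊕ Fin (m + 1))
    (h : ∃ i, L i ∩ Eff dle v r = ∅) :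
    (∀ w ∈ Eff dle v r, ¬ Covers L w) ∧
    (∀ w ∈ Eff dle v r, ¬ IsSLCA L w) := by
  have key : ∀ w ∈ Eff dle v r, ∀ x, w ≤ x → x ∈ Eff dle v r := by
    intro w hw x hwx
    cases r with
    | inl k => exact le_trans hw hwx
    | inr k =>
      obtain ⟨hincw, hlo, hhi⟩ := hw
      have hincx : ∀ j : Fin m, Incomp x (v j) := by
        intro j
        constructor
        · intro hxv
          exact (hincw j).1 (le_trans hwx hxv)
        · intro hvx
          rcases hchain w (v j) x hwx hvx with h1 | h2
          · exact (hincw j).1 h1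
          · exact (hincw j).2 h2
      have hxne : ∀ j : Fin m, x ≠ v j := by
        intro j hxv
        exact (hincx j).1 (hxv ▸ le_refl x)
      refine ⟨hincx, ?_, ?_⟩
      · intro hk
        refine ⟨hdoc.trans _ _ _ (hlo hk).1 (hdoc.le_imp _ _ hwx), ?_⟩
        exact fun e => hxne _ e.symm
      · intro hk
        refine ⟨?_, hxne _⟩
        by_contra hnd
        rcases hdoc.total x (v ⟨(k : ℕ), hk⟩) with h1 | h2
        · exact hnd h1
        · exact (hincw ⟨(k : ℕ), hk⟩).1
            (hdoc.interval w w x (v ⟨(k : ℕ), hk⟩) (le_refl w) hwx (hhi hk).1 h2)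
  obtain ⟨i, hi⟩ := h
  have hnc : ∀ w ∈ Eff dle v r, ¬ Covers L w := by
    intro w hw hcov
    obtain ⟨x, hxL, hwx⟩ := hcov i
    have : x ∈ L i ∩ Eff dle v r := ⟨hxL, key w hw x hwx⟩
    simp [hi] at this
  exact ⟨hnc, fun w hw hs => hnc w hw hs.1⟩

end XMLDiv
end

section
/- (Correctness of the anchor-based partition.) Let (α, ≤) be a tree order with a document order ⊑, let v_1 ⊏ v_2 ⊏ ... ⊏ v_m (m ≥ 1) be pairwise incomparable anchor nodes, let L : ι → Set α be a family of keyword node lists, and let w ∈ α be a node that is not an ancestor-or-self of any anchor (¬∃ j, w ≤ v_j). Then w is an SLCA of L if and only if there is a region R among the effective areas D_1, ..., D_m, P_0, ..., P_m such that w ∈ R and w is an SLCA of the restricted family i ↦ L i ∩ R. Hence the new distinct SLCA results of a query can be computed area by area, independently in each of the 2m+1 effective areas. -/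
namespace XMLDiv

variable {α : Type*}

/-- Correctness of the anchor-based partition: a node `w` that is not an
ancestor-or-self of any anchor is an SLCA of the family `L` iff it lies in one
of the `2m+1` effective areas `R` and is an SLCA of the family `L` restricted
to `R`; hence the new distinct SLCA results can be computed area by area,
independently in each effective area. -/
theorem anchor_partition_correct [SemilatticeInf α]
    (hchain : ∀ a b c : α, a ≤ c → b ≤ c → a ≤ b ∨ b ≤ a)
    {dle : α → α → Prop} (hdoc : IsDocOrder dle)
    {m : ℕ} (hm : 1 ≤ m) (v : Fin m → α)
    (hord : ∀ i j : Fin m, i < j → Dlt dle (v i) (v j))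
    (hinc : ∀ i j : Fin m, i ≠ j → Incomp (v i) (v j))
    {ι : Type*} (L : ι → Set α) {w : α} (hw : ¬ ∃ j, w ≤ v j) :
    IsSLCA L w ↔
      ∃ r : Fin m ⊕ Fin (m + 1), w ∈ Eff dle v r ∧
        IsSLCA (fun i => L i ∩ Eff dle v r) w := by
  classical
  push_neg at hw
  -- Every effective area containing w is closed under taking descendants of w.
  have hclosed : ∀ r : Fin m ⊕ Fin (m + 1), w ∈ Eff dle v r →
      ∀ x, w ≤ x → x ∈ Eff dle v r := by
    rintro (k | k) hmem x hx
    · exact le_trans hmem hx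
    · obtain ⟨hincs, hlo, hhi⟩ := hmem
      have hincx : ∀ j : Fin m, Incomp x (v j) := by
        intro j
        refine ⟨fun hxj => hw j (le_trans hx hxj), fun hjx => ?_⟩
        rcases hchain w (v j) x hx hjx with h | h
        · exact hw j h
        · exact (hincs j).2 h
      refine ⟨hincx, ?_, ?_⟩
      · intro h1
        refine ⟨hdoc.trans _ _ _ (hlo h1).1 (hdoc.le_imp _ _ hx), fun he => ?_⟩
        exact (hincx _).2 (le_of_eq he)
      · intro h2
        have hne : x ≠ v ⟨(k : ℕ), h2⟩ := fun he => (hincx _).1 (le_of_eq he)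
        have hnle : ¬ dle (v ⟨(k : ℕ), h2⟩) x := by
          intro hvx
          exact (hincs _).1 (hdoc.interval w w x (v ⟨(k : ℕ), h2⟩) le_rfl hx
            (hhi h2).1 hvx)
        rcases hdoc.total x (v ⟨(k : ℕ), h2⟩) with h | h
        · exact ⟨h, hne⟩
        · exact absurd h hnle
  -- Covers transfers between L and the restricted family, for descendants of w.
  have hcov : ∀ r : Fin m ⊕ Fin (m + 1), w ∈ Eff dle v r → ∀ u, w ≤ u →
      (Covers L u ↔ Covers (fun i => L i ∩ Eff dle v r) u) := by
    intro r hr u hu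
    constructor
    · intro hc i
      obtain ⟨x, hx, hux⟩ := hc i
      exact ⟨x, ⟨hx, hclosed r hr x (le_trans hu hux)⟩, hux⟩
    · intro hc i
      obtain ⟨x, hx, hux⟩ := hc i
      exact ⟨x, hx.1, hux⟩
  -- w lies in some effective area.
  have hex : ∃ r : Fin m ⊕ Fin (m + 1), w ∈ Eff dle v r := by
    by_cases h : ∃ j, v j ≤ w
    · obtain ⟨j, hj⟩ := h
      exact ⟨Sum.inl j, hj⟩
    · push_neg at h
      have hincw : ∀ j : Fin m, Incomp w (v j) := fun j => ⟨hw j, h j⟩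
      have hflip : ∀ j : Fin m, ¬ Dlt dle (v j) w → Dlt dle w (v j) := by
        intro j hnd
        have hne : w ≠ v j := fun he => hw j (le_of_eq he)
        rcases hdoc.total w (v j) with hh | hh
        · exact ⟨hh, hne⟩
        · exact absurd ⟨hh, fun he => hne he.symm⟩ hnd
      set S : Finset (Fin m) := Finset.univ.filter (fun j => Dlt dle (v j) w) with hS
      by_cases hSe : S.Nonempty
      · obtain ⟨j0, hj0mem, hj0max⟩ := S.exists_max_image (fun j => j) hSe
        have hj0 : Dlt dle (v j0) w := by
          simpa [hS] using hj0mem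
        refine ⟨Sum.inr ⟨(j0 : ℕ) + 1, by have := j0.isLt; omega⟩, ?_, ?_, ?_⟩
        · exact hincw
        · intro h1
          have heq : (⟨(j0 : ℕ) + 1 - 1, by have := j0.isLt; omega⟩ : Fin m) = j0 :=
            Fin.ext (by simp)
          simpa [heq] using hj0
        · intro h2
          apply hflip
          intro hd
          have hmem : (⟨(j0 : ℕ) + 1, h2⟩ : Fin m) ∈ S := by
            simp [hS, hd]
          have := hj0max _ hmem
          have h3 : ((⟨(j0 : ℕ) + 1, h2⟩ : Fin m) : ℕ) ≤ (j0 : ℕ) := this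
          simp at h3
      · refine ⟨Sum.inr ⟨0, by omega⟩, hincw, ?_, ?_⟩
        · intro h1
          simp at h1
        · intro h2
          apply hflip
          intro hd
          exact hSe ⟨⟨0, h2⟩, by simp [hS, hd]⟩
  obtain ⟨r0, hr0⟩ := hex
  constructor
  · rintro ⟨hc, hmin⟩
    refine ⟨r0, hr0, (hcov r0 hr0 w le_rfl).mp hc, ?_⟩
    intro u hu hcu
    exact hmin u hu ((hcov r0 hr0 u hu.le).mpr hcu)
  · rintro ⟨r, hr, hc, hmin⟩
    refine ⟨(hcov r hr w le_rfl).mpr hc, ?_⟩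
    intro u hu hcu
    exact hmin u hu ((hcov r hr u hu.le).mp hcu)


end XMLDiv
end

section
/- Let (α, ≤) be a tree order with a document order ⊑ and let v_1 ⊏ v_2 ⊏ ... ⊏ v_m (m ≥ 1) be pairwise incomparable anchor nodes. Then (1) each descendant area is closed under meets: if x, y ∈ D_k then x ⊓ y ∈ D_k; and (2) each gap area is closed under meets modulo proper ancestors of anchors: if x, y ∈ P_k, then either x ⊓ y ∈ P_k or there exists j with x ⊓ y < v_j. Hence an LCA candidate computed within an effective area either stays bounded in that area (and may be a new SLCA result) or is a proper ancestor of an anchor (and is discarded). -/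
namespace XMLDiv

variable {α : Type*}

/-- (1) Each descendant area is closed under meets; (2) each gap area is closed
under meets modulo proper ancestors of anchors: the meet of two of its nodes
either stays in the gap area or is a proper ancestor of some anchor. Hence an
LCA candidate computed within an effective area either stays bounded in that
area or is a proper ancestor of an anchor and is discarded. -/
theorem area_meet_closed [SemilatticeInf α]
    (hchain : ∀ a b c : α, a ≤ c → b ≤ c → a ≤ b ∨ b ≤ a)
    {dle : α → α → Prop} (hdoc : IsDocOrder dle)
    {m : ℕ} (hm : 1 ≤ m) (v : Fin m → α)
    (hord : ∀ i j : Fin m, i < j → Dlt dle (v i) (v j))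
    (hinc : ∀ i j : Fin m, i ≠ j → Incomp (v i) (v j)) :
    (∀ k : Fin m, ∀ x y : α, x ∈ Des (v k) → y ∈ Des (v k) → x ⊓ y ∈ Des (v k)) ∧
    (∀ k : Fin (m + 1), ∀ x y : α, x ∈ GapArea dle v k → y ∈ GapArea dle v k →
       x ⊓ y ∈ GapArea dle v k ∨ ∃ j, x ⊓ y < v j) := by
  constructor
  · intro k x y hx hy
    exact le_inf hx hy
  · intro k x y hx hy
    obtain ⟨hxinc, hx1, hx2⟩ := hx
    obtain ⟨hyinc, hy1, hy2⟩ := hy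
    by_cases h : ∃ j, x ⊓ y < v j
    · exact Or.inr h
    push_neg at h
    left
    have hwinc : ∀ j : Fin m, Incomp (x ⊓ y) (v j) := by
      intro j
      constructor
      · intro hle
        rcases lt_or_eq_of_le hle with hlt | heq
        · exact absurd hlt (h j)
        · exact (hxinc j).2 (heq ▸ inf_le_left)
      · intro hle
        exact (hxinc j).2 (le_trans hle inf_le_left)
    refine ⟨hwinc, ?_, ?_⟩
    · intro h1
      set u := v ⟨(k : ℕ) - 1, by have := k.isLt; omega⟩ with hu
      have hux := hx1 h1
      have hne : u ≠ x ⊓ y := by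
        intro heq
        exact (hwinc _).2 (le_of_eq heq)
      refine ⟨?_, hne⟩
      rcases hdoc.total u (x ⊓ y) with h' | h'
      · exact h'
      · exfalso
        have : x ⊓ y ≤ u :=
          hdoc.interval (x ⊓ y) (x ⊓ y) x u le_rfl inf_le_left h' hux.1
        exact (hwinc _).1 this
    · intro h2
      have hxv := hx2 h2
      have hne : x ⊓ y ≠ v ⟨(k : ℕ), h2⟩ := by
        intro heq
        exact (hwinc _).1 (le_of_eq heq)
      exact ⟨hdoc.trans _ _ _ (hdoc.le_imp _ _ inf_le_left) hxv.1, hne⟩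

end XMLDiv
end
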